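/- arXiv:2112.06434 — 4 statements merged into one kernel-verified Lean document; each statement's English description precedes it below -/
import Mathlib

section
/- Let α, β, γ, δ be real numbers with γ > α > 0, 0 < β ≤ δ < 1, and 1 - 2β(γ - α) ≤ δ ≤ 1 + 2α(β - 1). If MSE(n) = C²·n^{-2βγ} + σ²·n^{-(1-δ+2αβ)} for constants C ≠ 0 and σ² > 0, then MSE(n) = O(n^{-2α}). -/
open Filter

/- Both error terms decay at least as fast as n^{-2α}: the lower bound on δ combined with the
upper one gives α ≤ βγ, and the upper bound alone gives 2α ≤ 1 - δ + 2αβ. For n ≥ 1 a larger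
exponent means a smaller power, so K = C² + σ² works. -/

theorem mul_rpow_neg_add_mul_rpow_neg_le {x c₁ c₂ a₁ a₂ b : ℝ} (hx : 1 ≤ x)
    (hc₁ : 0 ≤ c₁) (hc₂ : 0 ≤ c₂) (h₁ : b ≤ a₁) (h₂ : b ≤ a₂) :
    c₁ * x ^ (-a₁) + c₂ * x ^ (-a₂) ≤ (c₁ + c₂) * x ^ (-b) := by
  have hx₁ : x ^ (-a₁) ≤ x ^ (-b) := Real.rpow_le_rpow_of_exponent_le hx (neg_le_neg h₁)
  have hx₂ : x ^ (-a₂) ≤ x ^ (-b) := Real.rpow_le_rpow_of_exponent_le hx (neg_le_neg h₂)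
  calc c₁ * x ^ (-a₁) + c₂ * x ^ (-a₂) ≤ c₁ * x ^ (-b) + c₂ * x ^ (-b) := by gcongr
    _ = (c₁ + c₂) * x ^ (-b) := by ring

theorem mse_big_O_general (α β γ δ : ℝ) (C σ2 : ℝ) (MSE : ℕ → ℝ)
    (hδlb : 1 - 2 * β * (γ - α) ≤ δ) (hδub : δ ≤ 1 + 2 * α * (β - 1))
    (hσ : 0 < σ2)
    (hMSE : ∀ n : ℕ, MSE n =
      C ^ 2 * (n : ℝ) ^ (-(2 * β * γ)) + σ2 * (n : ℝ) ^ (-(1 - δ + 2 * α * β))) :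
    ∃ K : ℝ, 0 < K ∧ ∀ᶠ n : ℕ in atTop, MSE n ≤ K * (n : ℝ) ^ (-(2 * α)) := by
  refine ⟨C ^ 2 + σ2, by positivity, ?_⟩
  filter_upwards [eventually_ge_atTop 1] with n hn
  rw [hMSE n]
  exact mul_rpow_neg_add_mul_rpow_neg_le (by exact_mod_cast hn) (sq_nonneg C) hσ.le
    (by linarith) (by linarith)

/-- Proposition 4.2(i): under the exponent constraints, the MSE of the scalable
subagging estimator is O(n^{-2α}). -/
theorem mse_big_O (α β γ δ : ℝ) (C σ2 : ℝ) (MSE : ℕ → ℝ)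
    (hαpos : 0 < α) (hαγ : α < γ)
    (hβpos : 0 < β) (hβδ : β ≤ δ) (hδlt : δ < 1)
    (hδlb : 1 - 2 * β * (γ - α) ≤ δ) (hδub : δ ≤ 1 + 2 * α * (β - 1))
    (hC : C ≠ 0) (hσ : 0 < σ2)
    (hMSE : ∀ n : ℕ, MSE n =
      C ^ 2 * (n : ℝ) ^ (-(2 * β * γ)) + σ2 * (n : ℝ) ^ (-(1 - δ + 2 * α * β))) :
    ∃ K : ℝ, 0 < K ∧ ∀ᶠ n : ℕ in atTop, MSE n ≤ K * (n : ℝ) ^ (-(2 * α)) :=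
  mse_big_O_general α β γ δ C σ2 MSE hδlb hδub hσ hMSE
end

section
/- Let α, β, γ, δ be real numbers with γ > α > 0, 0 < β ≤ δ < 1, 1 - 2β(γ - α) ≤ δ, and δ < 1 + 2α(β - 1). If MSE(n) = C²·n^{-2βγ} + σ²·n^{-(1-δ+2αβ)} for constants C ≠ 0 and σ² > 0, then MSE(n) = o(n^{-2α}), i.e., n^{2α}·MSE(n) → 0 as n → ∞. -/
open Filter Topology

lemma tendsto_rpow_mul_const_mul_rpow_neg {a e : ℝ} (hae : a < e) (c : ℝ) :
    Tendsto (fun x : ℝ => x ^ a * (c * x ^ (-e))) atTop (𝓝 0) := by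
  have hdecay : Tendsto (fun x : ℝ => c * x ^ (-(e - a))) atTop (𝓝 0) := by
    simpa using (tendsto_rpow_neg_atTop (sub_pos.2 hae)).const_mul c
  refine hdecay.congr' ?_
  filter_upwards [eventually_gt_atTop 0] with x hx
  rw [mul_left_comm, ← Real.rpow_add hx]
  ring_nf

theorem mse_little_o_general (α β γ δ : ℝ) (C σ2 : ℝ) (MSE : ℕ → ℝ)
    (hδlb : 1 - 2 * β * (γ - α) ≤ δ) (hδub : δ < 1 + 2 * α * (β - 1))
    (hMSE : ∀ n : ℕ, MSE n =
      C ^ 2 * (n : ℝ) ^ (-(2 * β * γ)) + σ2 * (n : ℝ) ^ (-(1 - δ + 2 * α * β))) :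
    Tendsto (fun n : ℕ => (n : ℝ) ^ (2 * α) * MSE n) atTop (nhds 0) := by
  -- the bias exponent beats 2α only by chaining both bounds on δ
  have hbias : 2 * α < 2 * β * γ := by linarith
  have hvar : 2 * α < 1 - δ + 2 * α * β := by linarith
  simp_rw [hMSE, mul_add]
  rw [← add_zero (0 : ℝ)]
  exact ((tendsto_rpow_mul_const_mul_rpow_neg hbias (C ^ 2)).add
    (tendsto_rpow_mul_const_mul_rpow_neg hvar σ2)).comp tendsto_natCast_atTop_atTop

/-- Proposition 4.2(ii): with δ strictly below the upper bound 1 + 2α(β-1),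
the MSE of the scalable subagging estimator is o(n^{-2α}). -/
theorem mse_little_o (α β γ δ : ℝ) (C σ2 : ℝ) (MSE : ℕ → ℝ)
    (hαpos : 0 < α) (hαγ : α < γ)
    (hβpos : 0 < β) (hβδ : β ≤ δ) (hδlt : δ < 1)
    (hδlb : 1 - 2 * β * (γ - α) ≤ δ) (hδub : δ < 1 + 2 * α * (β - 1))
    (hC : C ≠ 0) (hσ : 0 < σ2)
    (hMSE : ∀ n : ℕ, MSE n =
      C ^ 2 * (n : ℝ) ^ (-(2 * β * γ)) + σ2 * (n : ℝ) ^ (-(1 - δ + 2 * α * β))) :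
    Tendsto (fun n : ℕ => (n : ℝ) ^ (2 * α) * MSE n) atTop (nhds 0) :=
  mse_little_o_general α β γ δ C σ2 MSE hδlb hδub hMSE
end

section
/- Assume E[θ̂_n] − θ ~ C·n^{-γ} and Var(θ̂_n) ~ σ²·n^{-2α} with γ > α > 0, C ≠ 0, σ² > 0. Let b(n) ~ c₂n^β with β = 1/(1+2(γ−α)), h = b, and θ̄ be the average of q = ⌊(n−b)/h⌋+1 i.i.d. copies of θ̂_b. Then [Bias(θ̄)]² = Θ(Var(θ̄)), i.e., the ratio [Bias(θ̄)]²/Var(θ̄) converges to a positive finite constant as n → ∞. -/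
/-!
All hypotheses are asymptotic equivalences, and `~` is compatible with products, quotients,
real powers and composition with `b → ∞`. The number of blocks is `q = ⌊n / b⌋ ~ n / b`, so
`Bias² / (Var / q) ~ (C² / σ²) · b^(-2γ + 2α) · n / b = (C² / σ²) · n · b^(-s)` with
`s = 1 + 2(γ - α)`, and `b ~ c₂ n^(1/s)` makes `n · b^(-s) ~ c₂^(-s)` constant.
-/

open Filter Asymptotics Real

theorem isEquivalent_sub_div_add_one {b : ℕ → ℕ}
    (h : Tendsto (fun n : ℕ => (n : ℝ) / b n) atTop atTop) :
    (fun n => (((n - b n) / b n + 1 : ℕ) : ℝ)) ~[atTop] fun n => (n : ℝ) / b n := by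
  refine (isEquivalent_nat_floor.comp_tendsto h).congr_left ?_
  filter_upwards [h.eventually_ge_atTop 1] with n hn
  have hb : 0 < b n := Nat.pos_of_ne_zero fun h0 => by norm_num [h0] at hn
  have hbn : b n ≤ n := by
    exact_mod_cast (one_le_div (by exact_mod_cast hb)).mp hn
  simp only [Function.comp_apply, Nat.floor_div_eq_div, ← Nat.div_eq_sub_div hb hbn]

theorem tendsto_natCast_div_atTop_of_isEquivalent {x : ℕ → ℝ} {c β : ℝ} (hc : 0 < c)
    (hβ : β < 1) (hx : x ~[atTop] fun n : ℕ => c * (n : ℝ) ^ β) :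
    Tendsto (fun n : ℕ => (n : ℝ) / x n) atTop atTop := by
  have hpow : Tendsto (fun n : ℕ => c⁻¹ * (n : ℝ) ^ (1 - β)) atTop atTop :=
    ((tendsto_rpow_atTop (sub_pos.2 hβ)).comp tendsto_natCast_atTop_atTop).const_mul_atTop
      (inv_pos.2 hc)
  refine (IsEquivalent.refl.div hx).symm.tendsto_atTop (hpow.congr' ?_)
  filter_upwards [eventually_gt_atTop 0] with n hn
  rw [rpow_sub (by exact_mod_cast hn), rpow_one]
  simp only [Pi.div_apply]
  field_simp

theorem mul_mul_rpow_rpow_neg_of_mul_eq_one {c x β s : ℝ} (hc : 0 < c) (hx : 0 < x)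
    (hβs : β * s = 1) :
    x * (c * x ^ β) ^ (-s) = c ^ (-s) := by
  rw [mul_rpow hc.le (rpow_nonneg hx.le _), ← rpow_mul hx.le, mul_neg, hβs, rpow_neg_one]
  field_simp

theorem sq_mul_rpow_div_div_eq {C σ2 x y γ α : ℝ} (hσ : σ2 ≠ 0) (hx : 0 < x) :
    (C * x ^ (-γ)) ^ 2 / (σ2 * x ^ (-(2 * α)) / (y / x)) =
      C ^ 2 / σ2 * y * x ^ (-(1 + 2 * (γ - α))) := by
  have e : x ^ (-(1 + 2 * (γ - α))) = (x ^ (-γ)) ^ 2 / (x ^ (-(2 * α)) * x) := by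
    rw [← rpow_natCast, ← rpow_mul hx.le, ← rpow_add_one hx.ne', ← rpow_sub hx]
    ring_nf
  have hx2α : x ^ (-(2 * α)) ≠ 0 := (rpow_pos_of_pos hx _).ne'
  rw [e]
  field_simp

theorem bias_sq_theta_of_var_general (α γ c₂ C σ2 : ℝ) (bias v : ℕ → ℝ) (b : ℕ → ℕ)
    (hαγ : α < γ) (hC : C ≠ 0) (hσ : 0 < σ2) (hc₂ : 0 < c₂)
    (hbias : Tendsto (fun m : ℕ => bias m / (C * (m : ℝ) ^ (-γ))) atTop (nhds 1))
    (hvar : Tendsto (fun m : ℕ => v m / (σ2 * (m : ℝ) ^ (-(2 * α)))) atTop (nhds 1))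
    (hb : Tendsto (fun n : ℕ =>
      (b n : ℝ) / (c₂ * (n : ℝ) ^ (1 / (1 + 2 * (γ - α))))) atTop (nhds 1)) :
    ∃ K : ℝ, 0 < K ∧
      Tendsto (fun n : ℕ =>
          (bias (b n)) ^ 2 / (v (b n) / ((n - b n) / b n + 1 : ℕ)))
        atTop (nhds K) := by
  set s := 1 + 2 * (γ - α)
  have hs : 1 < s := by linarith
  have hbg : (fun n => (b n : ℝ)) ~[atTop] fun n => c₂ * (n : ℝ) ^ (1 / s) :=
    isEquivalent_of_tendsto_one hb
  have hbTop : Tendsto b atTop atTop := tendsto_natCast_atTop_iff.mp <|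
    hbg.symm.tendsto_atTop <| ((tendsto_rpow_atTop (by positivity)).comp
      tendsto_natCast_atTop_atTop).const_mul_atTop hc₂
  have hq := isEquivalent_sub_div_add_one
    (tendsto_natCast_div_atTop_of_isEquivalent hc₂ ((div_lt_one (by positivity)).2 hs) hbg)
  have hbias' := (isEquivalent_of_tendsto_one hbias).comp_tendsto hbTop
  have hvar' := (isEquivalent_of_tendsto_one hvar).comp_tendsto hbTop
  have hratio : (fun n => bias (b n) ^ 2 / (v (b n) / ((n - b n) / b n + 1 : ℕ))) ~[atTop]
      fun n : ℕ => C ^ 2 / σ2 * n * (b n : ℝ) ^ (-s) := by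
    refine ((hbias'.pow 2).div (hvar'.div hq)).congr_right ?_
    filter_upwards [hbTop.eventually_gt_atTop 0] with n hn
    simp only [Pi.div_apply, Pi.pow_apply, Function.comp_apply]
    exact sq_mul_rpow_div_div_eq hσ.ne' (by exact_mod_cast hn)
  have hlimit : (fun n : ℕ => C ^ 2 / σ2 * n * (b n : ℝ) ^ (-s)) ~[atTop]
      Function.const ℕ (C ^ 2 / σ2 * c₂ ^ (-s)) := by
    have hbs := hbg.rpow (fun n => by positivity) (r := -s)
    refine ((IsEquivalent.refl (u := fun n : ℕ => C ^ 2 / σ2 * n)).mul hbs).congr_right ?_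
    filter_upwards [eventually_gt_atTop 0] with n hn
    simp only [Pi.mul_apply, Pi.pow_apply, Function.const_apply]
    rw [mul_assoc, mul_mul_rpow_rpow_neg_of_mul_eq_one hc₂ (by exact_mod_cast hn)
      (one_div_mul_cancel (by positivity))]
  exact ⟨C ^ 2 / σ2 * c₂ ^ (-s), by positivity, (hratio.trans hlimit).tendsto_const⟩

/-- Corollary 4.1(ii): with Bias(θ̂_m) ~ C m^{-γ}, Var(θ̂_m) ~ σ² m^{-2α},
b(n) ~ c₂ n^β at the optimal β = 1/(1+2(γ-α)), h = b, and the subagging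
estimator θ̄ being the average of q = ⌊(n-b)/h⌋+1 i.i.d. copies of θ̂_b so that
Bias(θ̄)(n) = bias(b n) and Var(θ̄)(n) = v(b n)/q(n), the squared bias and the
variance are of exactly the same order: their ratio tends to a positive
finite constant. -/
theorem bias_sq_theta_of_var (α γ c₂ C σ2 : ℝ) (bias v : ℕ → ℝ) (b : ℕ → ℕ)
    (hαpos : 0 < α) (hαγ : α < γ) (hC : C ≠ 0) (hσ : 0 < σ2) (hc₂ : 0 < c₂)
    (hbias : Tendsto (fun m : ℕ => bias m / (C * (m : ℝ) ^ (-γ))) atTop (nhds 1))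
    (hvar : Tendsto (fun m : ℕ => v m / (σ2 * (m : ℝ) ^ (-(2 * α)))) atTop (nhds 1))
    (hb : Tendsto (fun n : ℕ =>
      (b n : ℝ) / (c₂ * (n : ℝ) ^ (1 / (1 + 2 * (γ - α))))) atTop (nhds 1)) :
    ∃ K : ℝ, 0 < K ∧
      Tendsto (fun n : ℕ =>
          (bias (b n)) ^ 2 / (v (b n) / ((n - b n) / b n + 1 : ℕ)))
        atTop (nhds K) :=
  bias_sq_theta_of_var_general α γ c₂ C σ2 bias v b hαγ hC hσ hc₂ hbias hvar hb
end

section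
/- Assume E[θ̂_n] − θ ~ C·n^{-γ} and Var(θ̂_n) ~ σ²·n^{-2α} with γ > α > 0, C ≠ 0, σ² > 0. Let b(n) ~ c₂n^β and h(n) ~ c₃n^δ with β = δ and 1/(1+2(γ−α)) < β < 1/(2(γ−α)), h ≥ b, and θ̄ the average of q = ⌊(n−b)/h⌋+1 i.i.d. copies of θ̂_b. Then [Bias(θ̄)]² = o(Var(θ̄)), i.e., [Bias(θ̄)]²/Var(θ̄) → 0 as n → ∞. -/
open Filter Asymptotics Topology

/-! The bias-to-variance ratio of the subagging estimator is `Bias(θ̂_b)² · q / Var(θ̂_b)`.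
By the assumed asymptotics `Bias(θ̂_m)² / Var(θ̂_m) ~ (C² / σ²) m^{-2(γ-α)}`, and since
`b ~ c₂ n^β` this is `~ K n^{-2β(γ-α)}`; the number of blocks satisfies `q ≤ n / h + 1` with
`n / h ~ c₃⁻¹ n^{1-β}`. Hence the ratio is `O(n^{1-β-2β(γ-α)} + n^{-2β(γ-α)})`, and both
exponents are negative exactly because `β (1 + 2(γ-α)) > 1`. -/

lemma isEquivalent_sq_div_rpow {f g : ℕ → ℝ} {C σ γ α : ℝ}
    (hf : f ~[atTop] fun m => C * (m : ℝ) ^ (-γ))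
    (hg : g ~[atTop] fun m => σ * (m : ℝ) ^ (-(2 * α))) :
    (fun m => f m ^ 2 / g m) ~[atTop] fun m => C ^ 2 / σ * (m : ℝ) ^ (-(2 * (γ - α))) := by
  refine ((hf.pow 2).div hg).congr_right ?_
  filter_upwards [eventually_gt_atTop 0] with m hm
  have hm : (0 : ℝ) < m := Nat.cast_pos.2 hm
  simp only [Pi.div_apply, Pi.pow_apply]
  rw [show -(2 * (γ - α)) = -γ + -γ - -(2 * α) by ring, Real.rpow_sub hm, Real.rpow_add hm]
  ring

lemma Asymptotics.IsEquivalent.rpow_const_mul_rpow {ι : Type*} {l : Filter ι} {u x : ι → ℝ}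
    {c β : ℝ} (hc : 0 ≤ c) (hx : ∀ i, 0 ≤ x i) (hu : u ~[l] fun i => c * x i ^ β) (p : ℝ) :
    (fun i => u i ^ p) ~[l] fun i => c ^ p * x i ^ (β * p) := by
  have hcx : 0 ≤ fun i => c * x i ^ β := fun i => by have := hx i; positivity
  refine (hu.rpow hcx).congr_right (Eventually.of_forall fun i => ?_)
  simp only [Pi.pow_apply]
  rw [Real.mul_rpow hc (Real.rpow_nonneg (hx i) β), ← Real.rpow_mul (hx i)]

lemma isEquivalent_natCast_div {u : ℕ → ℝ} {c β : ℝ}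
    (hu : u ~[atTop] fun n => c * (n : ℝ) ^ β) :
    (fun n : ℕ => (n : ℝ) / u n) ~[atTop] fun n => c⁻¹ * (n : ℝ) ^ (1 - β) := by
  refine (IsEquivalent.refl.div hu).congr_right ?_
  filter_upwards [eventually_gt_atTop 0] with n hn
  have hn : (0 : ℝ) < n := Nat.cast_pos.2 hn
  simp only [Pi.div_apply]
  rw [Real.rpow_sub hn, Real.rpow_one]
  field_simp

lemma tendsto_const_mul_natCast_rpow_of_neg (a : ℝ) {p : ℝ} (hp : p < 0) :
    Tendsto (fun n : ℕ => a * (n : ℝ) ^ p) atTop (𝓝 0) := by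
  have := ((tendsto_rpow_neg_atTop (neg_pos.2 hp)).comp tendsto_natCast_atTop_atTop).const_mul a
  simpa only [Function.comp_def, neg_neg, mul_zero] using this

lemma natCast_sub_div_add_one_le (n k m : ℕ) : (((n - k) / m + 1 : ℕ) : ℝ) ≤ n / m + 1 := by
  push_cast
  gcongr
  exact (Nat.cast_div_le).trans (by gcongr; exact_mod_cast Nat.sub_le n k)

lemma tendsto_mul_zero_of_le_add_one {ι : Type*} {l : Filter ι} {a d q : ι → ℝ}
    (had : Tendsto (fun i => a i * d i) l (𝓝 0)) (ha : Tendsto a l (𝓝 0))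
    (hq : ∀ i, 0 ≤ q i) (hqd : ∀ i, q i ≤ d i + 1) :
    Tendsto (fun i => a i * q i) l (𝓝 0) := by
  have hbound (i : ι) : ‖a i * q i‖ ≤ ‖a i * d i‖ + ‖a i‖ := calc ‖a i * q i‖ = |a i| * q i := by rw [Real.norm_eq_abs, abs_mul, abs_of_nonneg (hq i)]
    _ ≤ |a i| * (d i + 1) := by gcongr; exact hqd i
    _ ≤ |a i| * |d i| + |a i| := by rw [mul_add, mul_one]; gcongr; exact le_abs_self _
    _ = ‖a i * d i‖ + ‖a i‖ := by rw [Real.norm_eq_abs, Real.norm_eq_abs, abs_mul]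
  exact squeeze_zero_norm hbound (by simpa using had.norm.add ha.norm)

theorem bias_sq_little_o_var_general (α γ β c₂ c₃ C σ2 : ℝ) (bias v : ℕ → ℝ) (b h : ℕ → ℕ)
    (hαγ : α < γ)
    (hc₂ : 0 < c₂)
    (hβlb : 1 / (1 + 2 * (γ - α)) < β)
    (hbias : Tendsto (fun m : ℕ => bias m / (C * (m : ℝ) ^ (-γ))) atTop (nhds 1))
    (hvar : Tendsto (fun m : ℕ => v m / (σ2 * (m : ℝ) ^ (-(2 * α)))) atTop (nhds 1))
    (hb : Tendsto (fun n : ℕ => (b n : ℝ) / (c₂ * (n : ℝ) ^ β)) atTop (nhds 1))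
    (hh : Tendsto (fun n : ℕ => (h n : ℝ) / (c₃ * (n : ℝ) ^ β)) atTop (nhds 1)) :
    Tendsto (fun n : ℕ =>
        (bias (b n)) ^ 2 / (v (b n) / ((n - b n) / h n + 1 : ℕ)))
      atTop (nhds 0) := by
  have hs : 0 < γ - α := sub_pos.2 hαγ
  have hβ : 0 < β := (one_div_pos.2 (by linarith)).trans hβlb
  have hβs : 1 < β * (1 + 2 * (γ - α)) := (div_lt_iff₀ (by linarith)).1 hβlb
  have hbR := isEquivalent_of_tendsto_one hb
  have hbN : Tendsto b atTop atTop := tendsto_natCast_atTop_iff.1 <| hbR.symm.tendsto_atTop <|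
    ((tendsto_rpow_atTop hβ).comp tendsto_natCast_atTop_atTop).const_mul_atTop hc₂
  have hA : (fun n => bias (b n) ^ 2 / v (b n)) ~[atTop]
      fun n => C ^ 2 / σ2 * (c₂ ^ (-(2 * (γ - α))) * (n : ℝ) ^ (β * -(2 * (γ - α)))) :=
    ((isEquivalent_sq_div_rpow (isEquivalent_of_tendsto_one hbias)
      (isEquivalent_of_tendsto_one hvar)).comp_tendsto hbN).trans
      (IsEquivalent.refl.mul (hbR.rpow_const_mul_rpow hc₂.le (fun n => Nat.cast_nonneg n) _))
  have hD := isEquivalent_natCast_div (isEquivalent_of_tendsto_one hh)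
  have hA0 : Tendsto (fun n => bias (b n) ^ 2 / v (b n)) atTop (𝓝 0) :=
    hA.symm.tendsto_nhds <|
      (tendsto_const_mul_natCast_rpow_of_neg _ (by nlinarith)).congr fun n => mul_assoc _ _ _
  have hAD0 : Tendsto (fun n => bias (b n) ^ 2 / v (b n) * (n / h n)) atTop (𝓝 0) := by
    refine (hA.mul hD).symm.tendsto_nhds <|
      (tendsto_const_mul_natCast_rpow_of_neg (C ^ 2 / σ2 * c₂ ^ (-(2 * (γ - α))) * c₃⁻¹)
        (p := β * -(2 * (γ - α)) + (1 - β)) (by nlinarith)).congr' ?_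
    filter_upwards [eventually_gt_atTop 0] with n hn
    rw [Real.rpow_add (Nat.cast_pos.2 hn)]
    simp only [Pi.mul_apply]
    ring
  refine (tendsto_mul_zero_of_le_add_one hAD0 hA0 (fun n => Nat.cast_nonneg _)
    fun n => natCast_sub_div_add_one_le n (b n) (h n)).congr fun n => ?_
  rw [div_div_eq_mul_div, mul_div_right_comm]

/-- Corollary 4.1(i): with Bias(θ̂_m) ~ C m^{-γ}, Var(θ̂_m) ~ σ² m^{-2α},
b(n) ~ c₂ n^β and h(n) ~ c₃ n^δ with δ = β, 1/(1+2(γ-α)) < β < 1/(2(γ-α)),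
and h ≥ b, the subagging estimator θ̄ (average of q = ⌊(n-b)/h⌋+1 i.i.d.
copies of θ̂_b) has [Bias(θ̄)]² = o(Var(θ̄)). -/
theorem bias_sq_little_o_var (α γ β c₂ c₃ C σ2 : ℝ) (bias v : ℕ → ℝ) (b h : ℕ → ℕ)
    (hαpos : 0 < α) (hαγ : α < γ) (hC : C ≠ 0) (hσ : 0 < σ2)
    (hc₂ : 0 < c₂) (hc₃ : 0 < c₃)
    (hβlb : 1 / (1 + 2 * (γ - α)) < β) (hβub : β < 1 / (2 * (γ - α)))
    (hbias : Tendsto (fun m : ℕ => bias m / (C * (m : ℝ) ^ (-γ))) atTop (nhds 1))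
    (hvar : Tendsto (fun m : ℕ => v m / (σ2 * (m : ℝ) ^ (-(2 * α)))) atTop (nhds 1))
    (hb : Tendsto (fun n : ℕ => (b n : ℝ) / (c₂ * (n : ℝ) ^ β)) atTop (nhds 1))
    (hh : Tendsto (fun n : ℕ => (h n : ℝ) / (c₃ * (n : ℝ) ^ β)) atTop (nhds 1))
    (hhb : ∀ n, b n ≤ h n) :
    Tendsto (fun n : ℕ =>
        (bias (b n)) ^ 2 / (v (b n) / ((n - b n) / h n + 1 : ℕ)))
      atTop (nhds 0) :=
  bias_sq_little_o_var_general α γ β c₂ c₃ C σ2 bias v b h hαγ hc₂ hβlb hbias hvar hb hh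
end
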